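/- Let Γ be a group and let H and K be infinite virtually cyclic subgroups of Γ such that H ∩ K is infinite. Then N_Γ[H] = N_Γ[K], i.e. for every g ∈ Γ, H ∩ gHg⁻¹ is infinite if and only if K ∩ gKg⁻¹ is infinite. -/

import Mathlib

/-- A group is virtually cyclic if it contains a cyclic subgroup of finite index. -/
def VirtuallyCyclic (G : Type*) [Group G] : Prop :=
  ∃ C : Subgroup G, IsCyclic C ∧ C.FiniteIndex

/-- The conjugate subgroup `gHg⁻¹`. -/
def conjSubgroup {Γ : Type*} [Group Γ] (g : Γ) (H : Subgroup Γ) : Subgroup Γ :=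
  H.map (MulAut.conj g).toMonoidHom

/-!
An infinite subgroup of an infinite virtually cyclic group has finite index, since it meets the
finite-index infinite cyclic subgroup nontrivially. Hence, for infinite virtually cyclic subgroups,
having infinite intersection is the same as being commensurable. Conjugation preserves
commensurability, so `H ∩ gHg⁻¹` is infinite exactly when `g` lies in the commensurator of `H` in
the relative-index sense, and commensurable subgroups have the same commensurator.
-/

open Subgroup Pointwise

namespace Subgroup

variable {G : Type*} [Group G]

theorem card_inf_mul_relIndex (A B : Subgroup G) :
    Nat.card ↥(A ⊓ B) * A.relIndex B = Nat.card B := by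
  simpa [relIndex_bot_left] using relIndex_inf_mul_relIndex (⊥ : Subgroup G) A B

theorem infinite_inf_of_relIndex_ne_zero {A B : Subgroup G} [Infinite B]
    (h : A.relIndex B ≠ 0) : Infinite ↥(A ⊓ B) := by
  by_contra hfin
  have := not_infinite_iff_finite.mp hfin
  have hcard := card_inf_mul_relIndex A B
  rw [Nat.card_eq_zero_of_infinite (α := B)] at hcard
  exact mul_ne_zero Nat.card_pos.ne' h hcard

theorem infinite_subgroupOf_of_infinite_inf {A B : Subgroup G} [Infinite ↥(A ⊓ B)] :
    Infinite (A.subgroupOf B) := by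
  rw [← inf_subgroupOf_right]
  exact Infinite.of_injective _ (subgroupOfEquivOfLe inf_le_right).symm.injective

end Subgroup

/-- If `g` generates `C` and `1 ≠ g ^ n ∈ B`, then `g` has finite order in `C ⧸ B` (a group, as
`C` is abelian), which it generates. -/
theorem IsCyclic.finiteIndex_of_ne_bot {C : Type*} [Group C] [IsCyclic C] {B : Subgroup C}
    (hB : B ≠ ⊥) : B.FiniteIndex := by
  obtain ⟨g, hg⟩ := IsCyclic.exists_generator (α := C)
  obtain ⟨⟨b, hbB⟩, hb⟩ := ne_bot_iff_exists_ne_one.mp hB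
  obtain ⟨n, rfl⟩ := mem_zpowers_iff.mp (hg b)
  have hn : n ≠ 0 := by rintro rfl; simp at hb
  have hfin : IsOfFinOrder (g : C ⧸ B) :=
    isOfFinOrder_iff_zpow_eq_one.mpr ⟨n, hn, by simpa [← QuotientGroup.mk_zpow] using hbB⟩
  suffices Finite (C ⧸ B) from finiteIndex_of_finite_quotient
  by_contra hinf
  have := not_finite_iff_infinite.mp hinf
  refine hfin.orderOf_pos.ne' (Infinite.orderOf_eq_zero_of_forall_mem_zpowers fun q => ?_)
  induction q using QuotientGroup.induction_on with
  | H x =>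
    obtain ⟨k, rfl⟩ := mem_zpowers_iff.mp (hg x)
    exact ⟨k, by simp⟩

theorem VirtuallyCyclic.of_mulEquiv {G G' : Type*} [Group G] [Group G'] (e : G ≃* G')
    (h : VirtuallyCyclic G) : VirtuallyCyclic G' := by
  obtain ⟨C, hC, hCfin⟩ := h
  refine ⟨C.map e.toMonoidHom, isCyclic_of_surjective _ (e.subgroupMap C).surjective, ?_⟩
  rw [finiteIndex_iff, index_map_of_bijective e.bijective]
  exact hCfin.index_ne_zero

theorem VirtuallyCyclic.finiteIndex_of_infinite {G : Type*} [Group G] [Infinite G]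
    (hG : VirtuallyCyclic G) (B : Subgroup G) [Infinite B] : B.FiniteIndex := by
  obtain ⟨C, hC, hCfin⟩ := hG
  have : Infinite C := by
    by_contra hfin
    have : Finite G :=
      (finite_iff_finite_and_finiteIndex C).mpr ⟨not_infinite_iff_finite.mp hfin, hCfin⟩
    exact not_finite G
  have hCB : Infinite ↥(C ⊓ B) := infinite_inf_of_relIndex_ne_zero
    (isFiniteRelIndex_iff_relIndex_ne_zero.mp isFiniteRelIndex_of_finiteIndex)
  have hBC : B.subgroupOf C ≠ ⊥ := by
    rw [Ne, subgroupOf_eq_bot, disjoint_iff, inf_comm]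
    intro h
    rw [h] at hCB
    exact not_finite ↥(⊥ : Subgroup G)
  rw [finiteIndex_iff, ← relIndex_top_right]
  exact relIndex_ne_zero_trans (IsCyclic.finiteIndex_of_ne_bot hBC).index_ne_zero
    (by rw [relIndex_top_right]; exact hCfin.index_ne_zero)

section Commensurability

variable {Γ : Type*} [Group Γ]

theorem relIndex_ne_zero_of_infinite_inf {A B : Subgroup Γ} [Infinite B]
    (hB : VirtuallyCyclic B) [Infinite ↥(A ⊓ B)] : A.relIndex B ≠ 0 :=
  have := infinite_subgroupOf_of_infinite_inf (A := A) (B := B)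
  (hB.finiteIndex_of_infinite _).index_ne_zero

theorem infinite_inf_iff_commensurable {A B : Subgroup Γ} [Infinite A] [Infinite B]
    (hA : VirtuallyCyclic A) (hB : VirtuallyCyclic B) :
    Infinite ↥(A ⊓ B) ↔ Commensurable A B := by
  refine ⟨fun h => ⟨relIndex_ne_zero_of_infinite_inf hB, ?_⟩,
    fun h => infinite_inf_of_relIndex_ne_zero h.1⟩
  rw [inf_comm] at h
  exact relIndex_ne_zero_of_infinite_inf hA

theorem conjSubgroup_eq_smul (g : Γ) (H : Subgroup Γ) :
    conjSubgroup g H = ConjAct.toConjAct g • H := by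
  ext x
  rw [conjSubgroup, mem_map_equiv, mem_pointwise_smul_iff_inv_smul_mem]
  simp [ConjAct.smul_def]

theorem infinite_inf_conjSubgroup_iff_mem_commensurator {H : Subgroup Γ} [Infinite H]
    (hH : VirtuallyCyclic H) (g : Γ) :
    Infinite ↥(H ⊓ conjSubgroup g H) ↔ g ∈ Commensurable.commensurator H := by
  have e := equivSMul (ConjAct.toConjAct g) H
  have : Infinite ↥(ConjAct.toConjAct g • H) := Infinite.of_injective e e.injective
  rw [conjSubgroup_eq_smul, Commensurable.commensurator_mem_iff, Commensurable.comm,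
    infinite_inf_iff_commensurable hH (hH.of_mulEquiv e)]

end Commensurability

/-- If `H` and `K` are infinite virtually cyclic subgroups of `Γ` with `H ∩ K` infinite,
then `N_Γ[H] = N_Γ[K]`: for every `g`, `H ∩ gHg⁻¹` is infinite iff `K ∩ gKg⁻¹` is. -/
theorem commensurator_eq_of_commensurable
    {Γ : Type*} [Group Γ] (H K : Subgroup Γ)
    (hHinf : Infinite H) (hHvc : VirtuallyCyclic H)
    (hKinf : Infinite K) (hKvc : VirtuallyCyclic K)
    (hHK : Infinite ↥(H ⊓ K)) :
    ∀ g : Γ, Infinite ↥(H ⊓ conjSubgroup g H) ↔ Infinite ↥(K ⊓ conjSubgroup g K) := by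
  intro g
  rw [infinite_inf_conjSubgroup_iff_mem_commensurator hHvc,
    infinite_inf_conjSubgroup_iff_mem_commensurator hKvc,
    Commensurable.eq ((infinite_inf_iff_commensurable hHvc hKvc).mp hHK)]
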